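/- arXiv:2110.13405 — 2 statements merged into one kernel-verified Lean document; each statement's English description precedes it below -/
import Mathlib

section
/- The minima over the nonnegative integers of the two τ-sequences exist and satisfy min_{x ≥ 0} τ'(x) − min_{x ≥ 0} τ(x) = −t(t−1)/2 = −(1/8)·(((n−2)·α − Σ_{i=1}^{n−1} α/a_i)² − 1). (This is the identity which, via the d-invariant formula for Seifert homology spheres, implies that the d-invariants of Σ(a_1,…,a_n) and Σ(a_1,…,a_{n−1},a_n+α) are equal.) -/
/-!
Write `c = aₙ`. Expanding every ceiling in `Δ` through its residue and using the Seifert equation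
gives `α c (Δ j - 1 + E j) = j - ν j * c - r j * α`, where `E j` and `ν j` are the quotient and
remainder of `residueSum a b α j` by `α` and `0 ≤ r j < c`. The function `E` is `α`-periodic with
period sum `t`, and it is the same for `c` and `c + α` because the `bᵢ`, `i < n`, do not change.
By Popoviciu's formula `Δ j + E j` is the number of representations `j = ℓ c + h α` with `ℓ, h ≥ 0`,
so `τ x = stair α c R x - ∑_{i<x} E i`, where `stair` counts the lattice points below `x`.
Replacing `c` by `c + α` shears the staircase: column `ℓ` moves down by `ℓ` steps of `α`. Comparing
columns, `τ' (x + t α) ≤ τ x - t (t - 1) / 2`, and conversely every value of `τ'` is at least some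
value of `τ` minus `t (t - 1) / 2`; hence the minima differ by exactly `t (t - 1) / 2`.
-/

open Finset Function

section IntervalSums

variable {M : Type*} [AddCommMonoid M]

lemma sum_Ico_add_one_right (f : ℤ → M) {a b : ℤ} (h : a ≤ b) :
    ∑ x ∈ Ico a (b + 1), f x = ∑ x ∈ Ico a b, f x + f b := by
  rw [← insert_Ico_right_eq_Ico_add_one h, sum_insert right_notMem_Ico, add_comm]

lemma sum_Ico_consecutive_int (f : ℤ → M) {a b c : ℤ} (hab : a ≤ b) (hbc : b ≤ c) :
    ∑ x ∈ Ico a b, f x + ∑ x ∈ Ico b c, f x = ∑ x ∈ Ico a c, f x := by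
  rw [← sum_union (Ico_disjoint_Ico_consecutive a b c), Ico_union_Ico_eq_Ico hab hbc]

lemma sum_Ico_ite_lt (f : ℤ → M) {a t R : ℤ} (hR : t ≤ R) :
    ∑ ℓ ∈ Ico a R, (if ℓ < t then f ℓ else 0) = ∑ ℓ ∈ Ico a t, f ℓ := by
  rw [← sum_filter, Ico_filter_lt, min_eq_right hR]

end IntervalSums

lemma two_mul_sum_Ico_zero_id {t : ℤ} (ht : 0 ≤ t) : 2 * ∑ ℓ ∈ Ico 0 t, ℓ = t * (t - 1) := by
  induction t, ht using Int.leInduction with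
  | base => simp
  | succ s hs ih => rw [sum_Ico_add_one_right _ hs]; linear_combination ih

lemma two_mul_sum_Ico_zero_sub (k : ℤ) {t : ℤ} (ht : 0 ≤ t) :
    2 * ∑ ℓ ∈ Ico 0 t, (k - ℓ) = 2 * k * t - t * (t - 1) := by
  rw [sum_sub_distrib, mul_sub, two_mul_sum_Ico_zero_id ht, sum_const, Int.card_Ico, sub_zero,
    nsmul_eq_mul, Int.toNat_of_nonneg ht]
  ring

lemma Function.Periodic.sum_Ico_add_eq {f : ℤ → ℤ} {d : ℤ} (hf : Periodic f d) (hd : 0 ≤ d)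
    (y : ℤ) : ∑ x ∈ Ico y (y + d), f x = ∑ x ∈ Ico 0 d, f x := by
  have hshift : Periodic (fun y => ∑ x ∈ Ico y (y + d), f x) 1 := fun y => by
    have h₁ := sum_Ico_add_one_right f (show y ≤ y + d by omega)
    have h₂ := sum_Ico_consecutive_int f (show y ≤ y + 1 by omega)
      (show y + 1 ≤ y + d + 1 by omega)
    have h₃ : ∑ x ∈ Ico y (y + 1), f x = f y := by simp [sum_Ico_add_one_right f le_rfl]
    simp only [add_right_comm y 1 d]
    linear_combination h₂ + h₁ - h₃ + hf y
  simpa using hshift.int_mul_eq y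

lemma Function.Periodic.sum_Ico_zero_add_mul {f : ℤ → ℤ} {d : ℤ} (hf : Periodic f d)
    (hd : 0 ≤ d) {y k : ℤ} (hy : 0 ≤ y) (hk : 0 ≤ k) :
    ∑ x ∈ Ico 0 (y + k * d), f x = ∑ x ∈ Ico 0 y, f x + k * ∑ x ∈ Ico 0 d, f x := by
  induction k, hk using Int.leInduction with
  | base => simp
  | succ k hk ih =>
    rw [show y + (k + 1) * d = y + k * d + d by ring, ← sum_Ico_consecutive_int f
      (add_nonneg hy (mul_nonneg hk hd)) (le_add_of_nonneg_right hd), hf.sum_Ico_add_eq hd, ih]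
    ring

lemma Function.Periodic.le_sum_Ico_zero {f : ℤ → ℤ} {d : ℤ} (hf : Periodic f d)
    (hd : 0 < d) (hf0 : ∀ x, 0 ≤ f x) (x : ℤ) : f x ≤ ∑ y ∈ Ico 0 d, f y := by
  have hx : f (x - x / d * d) = f x := by simpa using hf.sub_int_mul_eq (x := x) (x / d)
  rw [← hx, mul_comm, ← Int.emod_def]
  exact single_le_sum (fun y _ => hf0 y)
    (mem_Ico.2 ⟨Int.emod_nonneg _ hd.ne', Int.emod_lt_of_pos _ hd⟩)

namespace TauSequence

section Ceil

variable {d : ℤ}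

lemma mul_ceil_intCast_div (hd : 0 < d) (v : ℤ) : d * ⌈(v : ℚ) / d⌉ = v + (-v) % d := by
  lift d to ℕ using hd.le
  rw [Int.cast_natCast, Rat.ceil_intCast_div_natCast]
  linarith [Int.emod_def (-v) d]

lemma ceil_intCast_add_mul_div (hd : d ≠ 0) (v k : ℤ) :
    ⌈((v + k * d : ℤ) : ℚ) / d⌉ = ⌈(v : ℚ) / d⌉ + k := by
  push_cast
  rw [add_div, mul_div_cancel_right₀ _ (Int.cast_ne_zero.2 hd), Int.ceil_add_intCast]

lemma ceil_intCast_div_eq_one {r : ℤ} (hr : 0 < r) (hrd : r ≤ d) : ⌈(r : ℚ) / d⌉ = 1 := by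
  have hd : (0 : ℚ) < d := by exact_mod_cast hr.trans_le hrd
  rw [Int.ceil_eq_iff]
  push_cast
  exact ⟨by rw [sub_self]; positivity, (div_le_one hd).2 (by exact_mod_cast hrd)⟩

lemma max_zero_ceil_intCast_add_one_div (hd : 0 < d) (v : ℤ) :
    max 0 ⌈((v + 1 : ℤ) : ℚ) / d⌉ = max 0 ⌈(v : ℚ) / d⌉ + if 0 ≤ v ∧ d ∣ v then 1 else 0 := by
  obtain ⟨q, r, hr0, hrd, rfl⟩ : ∃ q r, 0 ≤ r ∧ r < d ∧ v = r + q * d :=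
    ⟨v / d, v % d, Int.emod_nonneg _ hd.ne', Int.emod_lt_of_pos _ hd, by
      rw [Int.emod_def]; ring⟩
  rw [show r + q * d + 1 = r + 1 + q * d by ring, ceil_intCast_add_mul_div hd.ne',
    ceil_intCast_add_mul_div hd.ne', ceil_intCast_div_eq_one (by omega) hrd]
  simp only [Int.dvd_add_left (dvd_mul_left d q)]
  rcases hr0.eq_or_lt with rfl | hr
  · have : 0 ≤ 0 + q * d ↔ 0 ≤ q := by
      rw [zero_add]; exact ⟨fun h => nonneg_of_mul_nonneg_left h hd, fun h => by positivity⟩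
    simp only [Int.cast_zero, zero_div, Int.ceil_zero, dvd_zero, and_true, this]
    split_ifs <;> omega
  · have hq : 0 ≤ r + q * d ↔ 0 ≤ q := ⟨fun h => by nlinarith, fun h => by positivity⟩
    have hndvd : ¬ d ∣ r := fun h => hr.ne' (Int.eq_zero_of_dvd_of_nonneg_of_lt hr0 hrd h)
    rw [ceil_intCast_div_eq_one hr hrd.le, if_neg (fun h => hndvd h.2)]
    omega

end Ceil

section Stair

variable {α c : ℤ}

/-- The number of pairs `(ℓ, h)` with `0 ≤ ℓ < R`, `0 ≤ h` and `ℓ * c + h * α < y`. -/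
noncomputable def stair (α c R y : ℤ) : ℤ := ∑ ℓ ∈ Ico 0 R, max 0 ⌈((y - ℓ * c : ℤ) : ℚ) / α⌉

lemma stair_of_nonpos (hα : 0 ≤ α) (hc : 0 ≤ c) (R : ℤ) {y : ℤ} (hy : y ≤ 0) :
    stair α c R y = 0 := by
  refine sum_eq_zero fun ℓ hℓ => max_eq_left (Int.ceil_le.2 ?_)
  have : y - ℓ * c ≤ 0 := by nlinarith [(mem_Ico.1 hℓ).1]
  rw [Int.cast_zero]
  exact div_nonpos_of_nonpos_of_nonneg (by exact_mod_cast this) (by exact_mod_cast hα)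

lemma stair_add_one (hα : 0 < α) (c R y : ℤ) :
    stair α c R (y + 1) = stair α c R y + #{ℓ ∈ Ico 0 R | 0 ≤ y - ℓ * c ∧ α ∣ y - ℓ * c} := by
  rw [stair, stair, ← sum_boole, ← sum_add_distrib]
  refine sum_congr rfl fun ℓ _ => ?_
  rw [show y + 1 - ℓ * c = y - ℓ * c + 1 by ring]
  exact max_zero_ceil_intCast_add_one_div hα _

/-- Popoviciu's formula for the number of representations `j = ℓ * c + h * α` with `ℓ, h ≥ 0`. -/
lemma card_filter_dvd_sub_mul (hα : 0 < α) (hc : 0 < c) (hcop : IsCoprime α c)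
    {j ν r w R : ℤ} (hν : 0 ≤ ν ∧ ν < α) (hr : 0 ≤ r ∧ r < c)
    (hw : α * c * w = j - ν * c - r * α) (hj : 0 ≤ j) (hjR : j < R) :
    (#{ℓ ∈ Ico 0 R | 0 ≤ j - ℓ * c ∧ α ∣ j - ℓ * c} : ℤ) = w + 1 := by
  have hw₁ : -1 ≤ w := by
    by_contra! h
    nlinarith [mul_le_mul_of_nonneg_left (show w ≤ -2 by omega) (mul_pos hα hc).le]
  have hsub : ∀ ℓ, j - ℓ * c = α * (c * w + r) + (ν - ℓ) * c := fun ℓ => by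
    linear_combination (-1 : ℤ) * hw
  have hfilter : {ℓ ∈ Ico 0 R | 0 ≤ j - ℓ * c ∧ α ∣ j - ℓ * c} =
      (Ico 0 (w + 1)).image fun h => ν + h * α := by
    ext ℓ
    simp only [mem_filter, mem_Ico, mem_image]
    constructor
    · rintro ⟨⟨hℓ, -⟩, hle, hdvd⟩
      rw [hsub, dvd_add_right (dvd_mul_right _ _)] at hdvd
      obtain ⟨g, hg⟩ := hcop.dvd_of_dvd_mul_right hdvd
      refine ⟨-g, ⟨by nlinarith, ?_⟩, by linarith⟩
      rw [hsub, hg] at hle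
      have h₁ : 0 ≤ c * (w + g) + r := nonneg_of_mul_nonneg_right (by linarith) hα
      have h₂ : 0 < c * (w + g + 1) := by linarith
      linarith [pos_of_mul_pos_right h₂ hc.le]
    · rintro ⟨h, ⟨h₀, h₁⟩, rfl⟩
      have hsub' : j - (ν + h * α) * c = α * (c * (w - h) + r) := by rw [hsub]; ring
      have hnonneg : 0 ≤ j - (ν + h * α) * c := by
        rw [hsub']; exact mul_nonneg hα.le (by nlinarith)
      have hℓ : 0 ≤ ν + h * α := add_nonneg hν.1 (mul_nonneg h₀ hα.le)
      refine ⟨⟨hℓ, ?_⟩, hnonneg, hsub' ▸ dvd_mul_right _ _⟩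
      nlinarith [le_mul_of_one_le_right hℓ hc]
  rw [hfilter, card_image_of_injective _ fun x y hxy => by simpa [hα.ne'] using hxy,
    Int.card_Ico, sub_zero, Int.toNat_of_nonneg (by omega)]

lemma sum_Ico_eq_stair_sub (hα : 0 < α) (hc : 0 < c) (hcop : IsCoprime α c)
    {Δ E ν r : ℤ → ℤ} (hν : ∀ j, 0 ≤ ν j ∧ ν j < α) (hr : ∀ j, 0 ≤ r j ∧ r j < c)
    (hw : ∀ j, α * c * (Δ j - 1 + E j) = j - ν j * c - r j * α) {x R : ℤ} (hx : 0 ≤ x)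
    (hxR : x < R) : ∑ i ∈ Ico 0 x, Δ i = stair α c R x - ∑ i ∈ Ico 0 x, E i := by
  induction x, hx using Int.leInduction with
  | base => simp [stair_of_nonpos hα.le hc.le]
  | succ x hx ih =>
    rw [sum_Ico_add_one_right _ hx, sum_Ico_add_one_right _ hx, stair_add_one hα,
      card_filter_dvd_sub_mul hα hc hcop (hν x) (hr x) (hw x) hx (by omega), ih (by omega)]
    ring

end Stair

section Comparison

variable {α c t : ℤ}

lemma two_mul_stair_add_le (hα : 0 < α) (ht : 0 ≤ t) {R : ℤ} (hR : t ≤ R) (y : ℤ) :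
    2 * stair α (c + α) R (y + t * α) ≤ 2 * stair α c R y + t * (t + 1) := by
  have key : ∀ ℓ ∈ Ico 0 R, max 0 ⌈((y + t * α - ℓ * (c + α) : ℤ) : ℚ) / α⌉ ≤
      max 0 ⌈((y - ℓ * c : ℤ) : ℚ) / α⌉ + if ℓ < t then t - ℓ else 0 := fun ℓ _ => by
    rw [show y + t * α - ℓ * (c + α) = y - ℓ * c + (t - ℓ) * α by ring,
      ceil_intCast_add_mul_div hα.ne']
    split_ifs <;> omega
  have hsum := sum_le_sum key
  rw [sum_add_distrib, sum_Ico_ite_lt _ hR] at hsum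
  rw [stair, stair]
  linarith [two_mul_sum_Ico_zero_sub t ht]

lemma exists_two_mul_stair_sub_le (hα : 0 < α) (hc : 0 < c) (ht : 0 ≤ t) {R : ℤ} (hR : t ≤ R)
    (z : ℤ) : ∃ k, 0 ≤ k ∧
      2 * stair α c R (z - k * α) + 2 * k * t - t * (t - 1) ≤ 2 * stair α (c + α) R z := by
  set g : ℤ → ℤ := fun ℓ => ⌈((z - ℓ * c : ℤ) : ℚ) / α⌉
  have hg : Antitone g := fun ℓ ℓ' h => Int.ceil_mono <| div_le_div_of_nonneg_right
    (by exact_mod_cast sub_le_sub_left (mul_le_mul_of_nonneg_right h hc.le) z)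
    (by exact_mod_cast hα.le)
  -- Lowering by the height `k` of column `t` costs each column `ℓ < t` at least `k - ℓ` points.
  refine ⟨max 0 (g t), le_max_left _ _, ?_⟩
  have key : ∀ ℓ ∈ Ico 0 R, max 0 ⌈((z - max 0 (g t) * α - ℓ * c : ℤ) : ℚ) / α⌉ +
      (if ℓ < t then max 0 (g t) - ℓ else 0) ≤ max 0 ⌈((z - ℓ * (c + α) : ℤ) : ℚ) / α⌉ :=
    fun ℓ hℓ => by
    rw [show z - max 0 (g t) * α - ℓ * c = z - ℓ * c + -max 0 (g t) * α by ring,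
      show z - ℓ * (c + α) = z - ℓ * c + -ℓ * α by ring, ceil_intCast_add_mul_div hα.ne',
      ceil_intCast_add_mul_div hα.ne']
    have := (mem_Ico.1 hℓ).1
    split_ifs with h
    · have := hg h.le; simp only [g] at this ⊢; omega
    · have := hg (not_lt.1 h); simp only [g] at this ⊢; omega
  have hsum := sum_le_sum key
  rw [sum_add_distrib, sum_Ico_ite_lt _ hR] at hsum
  rw [stair, stair]
  linarith [two_mul_sum_Ico_zero_sub (max 0 (g t)) ht]

end Comparison

section Minima

variable {α c t : ℤ} {E τ τ' : ℤ → ℤ}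

lemma exists_two_mul_le_two_mul_sub (hα : 0 < α) (ht : 0 ≤ t) (hEper : Periodic E α)
    (hEsum : ∑ i ∈ Ico 0 α, E i = t)
    (hτ : ∀ x R, 0 ≤ x → x < R → τ x = stair α c R x - ∑ i ∈ Ico 0 x, E i)
    (hτ' : ∀ x R, 0 ≤ x → x < R → τ' x = stair α (c + α) R x - ∑ i ∈ Ico 0 x, E i)
    {y : ℤ} (hy : 0 ≤ y) : ∃ z, 0 ≤ z ∧ 2 * τ' z ≤ 2 * τ y - t * (t - 1) := by
  have htα : 0 ≤ t * α := mul_nonneg ht hα.le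
  refine ⟨y + t * α, by omega, ?_⟩
  rw [hτ' _ (y + t * α + t + 1) (by omega) (by omega), hτ y (y + t * α + t + 1) hy (by omega),
    hEper.sum_Ico_zero_add_mul hα.le hy ht, hEsum]
  linarith [two_mul_stair_add_le (c := c) hα ht (R := y + t * α + t + 1) (by omega) y]

lemma exists_two_mul_sub_le_two_mul (hα : 0 < α) (hc : 0 < c) (ht : 0 ≤ t)
    (hE0 : ∀ j, 0 ≤ E j) (hEper : Periodic E α) (hEsum : ∑ i ∈ Ico 0 α, E i = t)
    (hτ : ∀ x R, 0 ≤ x → x < R → τ x = stair α c R x - ∑ i ∈ Ico 0 x, E i)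
    (hτ' : ∀ x R, 0 ≤ x → x < R → τ' x = stair α (c + α) R x - ∑ i ∈ Ico 0 x, E i)
    {z : ℤ} (hz : 0 ≤ z) : ∃ y, 0 ≤ y ∧ 2 * τ y - t * (t - 1) ≤ 2 * τ' z := by
  obtain ⟨k, hk, hle⟩ := exists_two_mul_stair_sub_le hα hc ht (R := z + t + 1) (by omega) z
  have hkα : 0 ≤ k * α := mul_nonneg hk hα.le
  rw [hτ' z (z + t + 1) hz (by omega)]
  rcases le_or_gt 0 (z - k * α) with hy | hy
  · refine ⟨z - k * α, hy, ?_⟩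
    have hF := hEper.sum_Ico_zero_add_mul hα.le hy hk
    rw [sub_add_cancel, hEsum] at hF
    rw [hτ _ (z + t + 1) hy (by omega)]
    linarith
  · refine ⟨0, le_rfl, ?_⟩
    have hF : ∑ i ∈ Ico 0 z, E i ≤ ∑ i ∈ Ico 0 (0 + k * α), E i :=
      sum_le_sum_of_subset_of_nonneg (Ico_subset_Ico_right (by omega)) fun i _ _ => hE0 i
    rw [hEper.sum_Ico_zero_add_mul hα.le le_rfl hk, hEsum] at hF
    rw [hτ 0 1 le_rfl one_pos, stair_of_nonpos hα.le hc.le 1 le_rfl]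
    rw [stair_of_nonpos hα.le hc.le _ hy.le] at hle
    simp only [Ico_self, sum_empty] at hF ⊢
    linarith

lemma two_mul_sub_eq_of_isMin (hα : 0 < α) (hc : 0 < c) (hE0 : ∀ j, 0 ≤ E j)
    (hEper : Periodic E α) (hEsum : ∑ i ∈ Ico 0 α, E i = t)
    (hτ : ∀ x R, 0 ≤ x → x < R → τ x = stair α c R x - ∑ i ∈ Ico 0 x, E i)
    (hτ' : ∀ x R, 0 ≤ x → x < R → τ' x = stair α (c + α) R x - ∑ i ∈ Ico 0 x, E i)
    {m m' : ℤ} (hm : 0 ≤ m) (hm' : 0 ≤ m') (hmin : ∀ x, 0 ≤ x → τ m ≤ τ x)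
    (hmin' : ∀ x, 0 ≤ x → τ' m' ≤ τ' x) : 2 * (τ' m' - τ m) = -(t * (t - 1)) := by
  have ht : 0 ≤ t := hEsum ▸ sum_nonneg fun i _ => hE0 i
  obtain ⟨z, hz, hz'⟩ := exists_two_mul_le_two_mul_sub hα ht hEper hEsum hτ hτ' hm
  obtain ⟨y, hy, hy'⟩ := exists_two_mul_sub_le_two_mul hα hc ht hE0 hEper hEsum hτ hτ' hm'
  linarith [hmin y hy, hmin' z hz]

lemma exists_forall_sum_Ico_le {Δ : ℤ → ℤ} {B : ℤ} (hB : 0 ≤ B) (hΔ : ∀ j, B ≤ j → 0 ≤ Δ j) :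
    ∃ m, 0 ≤ m ∧ ∀ x, 0 ≤ x → ∑ i ∈ Ico 0 m, Δ i ≤ ∑ i ∈ Ico 0 x, Δ i := by
  obtain ⟨m, hm, hmin⟩ :=
    exists_min_image (Icc 0 B) (fun x => ∑ i ∈ Ico 0 x, Δ i) ⟨0, mem_Icc.2 ⟨le_rfl, hB⟩⟩
  refine ⟨m, (mem_Icc.1 hm).1, fun x hx => ?_⟩
  rcases le_total x B with h | h
  · exact hmin x (mem_Icc.2 ⟨hx, h⟩)
  · refine (hmin B (mem_Icc.2 ⟨hB, le_rfl⟩)).trans ?_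
    rw [← sum_Ico_consecutive_int Δ hB h]
    exact le_add_of_nonneg_right (sum_nonneg fun j hj => hΔ j (mem_Ico.1 hj).1)

lemma nonneg_of_mul_eq (hα : 0 < α) (hc : 0 < c) {Δ E ν r j B : ℤ} (hν : ν < α) (hr : r < c)
    (hw : α * c * (Δ - 1 + E) = j - ν * c - r * α) (hE : E ≤ B) (hj : α * c * (B + 1) ≤ j) :
    0 ≤ Δ := by
  have : α * c * (B - 1) < α * c * (Δ - 1 + E) := by
    rw [hw]; nlinarith [mul_lt_mul_of_pos_right hν hc, mul_lt_mul_of_pos_right hr hα]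
  linarith [lt_of_mul_lt_mul_left this (mul_pos hα hc).le]

end Minima

section Residues

lemma isCoprime_of_dvd_mul_add_one {d x u : ℤ} (h : d ∣ x * u + 1) : IsCoprime x d := by
  obtain ⟨k, hk⟩ := h
  exact ⟨-u, k, by linear_combination (-1 : ℤ) * hk⟩

lemma eq_of_dvd_mul_add_one {d x y u : ℤ} (hx : 0 ≤ x ∧ x < d) (hy : 0 ≤ y ∧ y < d)
    (hxu : d ∣ x * u + 1) (hyu : d ∣ y * u + 1) : x = y := by
  have hu : IsCoprime d u := (isCoprime_of_dvd_mul_add_one (by rwa [mul_comm] at hyu)).symm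
  have hd : d ∣ (x - y) * u := by
    rw [show (x - y) * u = (x * u + 1) - (y * u + 1) by ring]; exact dvd_sub hxu hyu
  exact sub_eq_zero.1 <| Int.eq_zero_of_abs_lt_dvd (hu.dvd_of_dvd_mul_right hd)
    (abs_sub_lt_iff.2 ⟨by linarith, by linarith⟩)

lemma sum_Ico_neg_mul_emod {d s : ℤ} (hs : IsCoprime s d) :
    ∑ ρ ∈ Ico 0 d, (-(ρ * s)) % d = ∑ ρ ∈ Ico 0 d, ρ := by
  obtain ⟨u, v, huv⟩ := hs
  have hmem : ∀ x, ∀ ρ ∈ Ico 0 d, (-(ρ * x)) % d ∈ Ico 0 d := fun x ρ hρ => by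
    have hd : 0 < d := by have := mem_Ico.1 hρ; omega
    exact mem_Ico.2 ⟨Int.emod_nonneg _ hd.ne', Int.emod_lt_of_pos _ hd⟩
  have hinv : ∀ p q, p * q ≡ 1 [ZMOD d] → ∀ ρ ∈ Ico 0 d, (-((-(ρ * p)) % d * q)) % d = ρ := by
    intro p q hpq ρ hρ
    obtain ⟨hρ₀, hρd⟩ := mem_Ico.1 hρ
    have : -((-(ρ * p)) % d * q) ≡ ρ [ZMOD d] := calc
      _ ≡ -(-(ρ * p) * q) [ZMOD d] := ((Int.mod_modEq _ d).mul_right q).neg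
      _ = ρ * (p * q) := by ring
      _ ≡ ρ * 1 [ZMOD d] := hpq.mul_left ρ
      _ = ρ := mul_one ρ
    rw [this, Int.emod_eq_of_lt hρ₀ hρd]
  have hsu : s * u ≡ 1 [ZMOD d] := Int.modEq_iff_dvd.2 ⟨v, by linear_combination (-1 : ℤ) * huv⟩
  exact sum_nbij' (fun ρ => (-(ρ * s)) % d) (fun ρ => (-(ρ * u)) % d) (hmem s) (hmem u)
    (hinv s u hsu) (hinv u s (by rwa [mul_comm])) fun _ _ => rfl

end Residues

section ResidueSum

variable {m : ℕ} {a b : Fin m → ℤ} {α : ℤ}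

def residueSum (a b : Fin m → ℤ) (α j : ℤ) : ℤ := ∑ i, (-(j * b i)) % a i * (α / a i)

lemma residueSum_nonneg (ha : ∀ i, 0 < a i) (hα : 0 ≤ α) (j : ℤ) : 0 ≤ residueSum a b α j :=
  sum_nonneg fun i _ =>
    mul_nonneg (Int.emod_nonneg _ (ha i).ne') (Int.ediv_nonneg hα (ha i).le)

lemma residueSum_periodic (hdvd : ∀ i, a i ∣ α) : Periodic (residueSum a b α) α := fun j => by
  refine sum_congr rfl fun i _ => ?_
  obtain ⟨g, hg⟩ := hdvd i
  rw [show -((j + α) * b i) = -(j * b i) + a i * (-(g * b i)) by rw [hg]; ring,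
    Int.add_mul_emod_self_left]

lemma residueSum_modEq (hdvd : ∀ i, a i ∣ α) (j : ℤ) :
    residueSum a b α j ≡ -(j * ∑ i, b i * (α / a i)) [ZMOD α] := by
  rw [mul_sum, ← sum_neg_distrib]
  refine Int.ModEq.sum fun i _ => ?_
  have := (Int.mod_modEq (-(j * b i)) (a i)).mul_right' (c := α / a i)
  rw [Int.mul_ediv_cancel' (hdvd i)] at this
  rw [show -(j * (b i * (α / a i))) = -(j * b i) * (α / a i) by ring]
  exact this

lemma two_mul_sum_residueSum (ha : ∀ i, 0 < a i) (hdvd : ∀ i, a i ∣ α) (hα : 0 ≤ α)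
    (hb : ∀ i, IsCoprime (b i) (a i)) :
    2 * ∑ ρ ∈ Ico 0 α, residueSum a b α ρ = α * ∑ i, (α - α / a i) := by
  simp only [residueSum]
  rw [sum_comm, mul_sum, mul_sum]
  refine sum_congr rfl fun i _ => ?_
  have hper : Periodic (fun ρ => (-(ρ * b i)) % a i) (a i) := fun ρ => by
    dsimp only
    rw [show -((ρ + a i) * b i) = -(ρ * b i) + a i * (-b i) by ring, Int.add_mul_emod_self_left]
  have hq := Int.ediv_mul_cancel (hdvd i)
  have hsum := hper.sum_Ico_zero_add_mul (ha i).le le_rfl (Int.ediv_nonneg hα (ha i).le)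
  rw [zero_add, hq, Ico_self, sum_empty, zero_add, sum_Ico_neg_mul_emod (hb i)] at hsum
  rw [← sum_mul, hsum]
  linear_combination
    (α / a i) ^ 2 * two_mul_sum_Ico_zero_id (ha i).le + (α + α / a i * (a i - 1)) * hq

lemma two_mul_sum_residueSum_emod (hdvd : ∀ i, a i ∣ α)
    (hK : IsCoprime (∑ i, b i * (α / a i)) α) (hα : 0 ≤ α) :
    2 * ∑ ρ ∈ Ico 0 α, residueSum a b α ρ % α = α * (α - 1) := by
  rw [sum_congr rfl fun ρ _ => residueSum_modEq hdvd ρ, sum_Ico_neg_mul_emod hK,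
    two_mul_sum_Ico_zero_id hα]

lemma sum_residueSum_div (ha : ∀ i, 0 < a i) (hdvd : ∀ i, a i ∣ α) (hα : 0 < α)
    (hb : ∀ i, IsCoprime (b i) (a i)) (hK : IsCoprime (∑ i, b i * (α / a i)) α) {t : ℤ}
    (ht : 2 * t = ((m : ℤ) - 1) * α - ∑ i, α / a i + 1) :
    ∑ ρ ∈ Ico 0 α, residueSum a b α ρ / α = t := by
  have hdecomp : ∑ ρ ∈ Ico 0 α, residueSum a b α ρ =
      α * ∑ ρ ∈ Ico 0 α, residueSum a b α ρ / α + ∑ ρ ∈ Ico 0 α, residueSum a b α ρ % α := by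
    rw [mul_sum, ← sum_add_distrib]
    exact sum_congr rfl fun ρ _ => (Int.mul_ediv_add_emod _ _).symm
  have hcard : ∑ i, (α - α / a i) = m * α - ∑ i, α / a i := by
    rw [sum_sub_distrib, sum_const, card_univ, Fintype.card_fin, nsmul_eq_mul]
  refine mul_left_cancel₀ (show 2 * α ≠ 0 by positivity) ?_
  linear_combination two_mul_sum_residueSum ha hdvd hα.le hb -
    two_mul_sum_residueSum_emod hdvd hK hα.le - 2 * hdecomp + α * hcard - α * ht

end ResidueSum

section Seifert

variable {m : ℕ} {a b : Fin m → ℤ} {α c e0 bn : ℤ}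

lemma dvd_mul_add_one_of_seifert_eq (ha : ∀ i, a i ≠ 0) (hα : α = ∏ i, a i)
    (heq : e0 * (α * c) + ∑ i, b i * (α / a i * c) + bn * α = -1) (i : Fin m) :
    a i ∣ b i * (α / a i * c) + 1 := by
  have hrest : a i ∣ ∑ k ∈ univ.erase i, b k * (α / a k * c) := by
    refine dvd_sum fun k hk => Dvd.dvd.mul_left (Dvd.dvd.mul_right ?_ c) (b k)
    rw [hα, ← prod_erase_mul _ _ (mem_univ k), Int.mul_ediv_cancel _ (ha k)]
    exact dvd_prod_of_mem _ (mem_erase.2 ⟨(ne_of_mem_erase hk).symm, mem_univ i⟩)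
  rw [← add_sum_erase _ _ (mem_univ i)] at heq
  rw [show b i * (α / a i * c) + 1 =
    -(e0 * c + bn) * α - ∑ k ∈ univ.erase i, b k * (α / a k * c) by linear_combination heq]
  exact dvd_sub (Dvd.dvd.mul_left (hα ▸ dvd_prod_of_mem a (mem_univ i)) _) hrest

lemma dvd_sum_mul_add_one_of_seifert_eq
    (heq : e0 * (α * c) + ∑ i, b i * (α / a i * c) + bn * α = -1) :
    α ∣ (∑ i, b i * (α / a i)) * c + 1 :=
  ⟨-(e0 * c + bn), by simp only [sum_mul, mul_assoc]; linear_combination heq⟩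

lemma eq_of_seifert_eq_of_dvd_sub {c' e0' bn' : ℤ} {b' : Fin m → ℤ} (ha : ∀ i, a i ≠ 0)
    (hα : α = ∏ i, a i) (hb : ∀ i, 0 ≤ b i ∧ b i < a i) (hb' : ∀ i, 0 ≤ b' i ∧ b' i < a i)
    (heq : e0 * (α * c) + ∑ i, b i * (α / a i * c) + bn * α = -1)
    (heq' : e0' * (α * c') + ∑ i, b' i * (α / a i * c') + bn' * α = -1) (hcc' : α ∣ c' - c) :
    b = b' := by
  funext i
  refine eq_of_dvd_mul_add_one (hb i) (hb' i) (dvd_mul_add_one_of_seifert_eq ha hα heq i) ?_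
  have hi : a i ∣ c' - c := (hα ▸ dvd_prod_of_mem a (mem_univ i)).trans hcc'
  rw [show b' i * (α / a i * c) + 1 = b' i * (α / a i * c') + 1 - b' i * (α / a i) * (c' - c)
    by ring]
  exact dvd_sub (dvd_mul_add_one_of_seifert_eq ha hα heq' i) (hi.mul_left _)

lemma neg_of_seifert_eq (ha : ∀ i, 0 < a i) (hα : 0 < α) (hc : 0 < c) (hb : ∀ i, 0 ≤ b i)
    (hbn : 0 ≤ bn)
    (heq : e0 * (α * c) + ∑ i, b i * (α / a i * c) + bn * α = -1) : e0 < 0 := by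
  have : 0 ≤ ∑ i, b i * (α / a i * c) := sum_nonneg fun i _ =>
    mul_nonneg (hb i) (mul_nonneg (Int.ediv_nonneg hα.le (ha i).le) hc.le)
  by_contra! h
  nlinarith [mul_nonneg h (mul_pos hα hc).le, mul_nonneg hbn hα.le]

/-- Each ceiling is traded for its residue via `mul_ceil_intCast_div`; the `|e0|`-term then cancels
against the Seifert equation `heq`. -/
lemma mul_Δ_eq (ha : ∀ i, 0 < a i) (hdvd : ∀ i, a i ∣ α) (hc : 0 < c) (he0 : e0 < 0)
    (heq : e0 * (α * c) + ∑ i, b i * (α / a i * c) + bn * α = -1) {Δ : ℤ → ℤ}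
    (hΔ : ∀ x : ℤ, Δ x = 1 + |e0| * x -
      ((∑ i, ⌈(x * b i : ℚ) / (a i : ℚ)⌉) + ⌈(x * bn : ℚ) / (c : ℚ)⌉)) (j : ℤ) :
    α * c * (Δ j - 1 + residueSum a b α j / α) =
      j - residueSum a b α j % α * c - (-(j * bn)) % c * α := by
  have hi : ∀ i, α * c * ⌈(j * b i : ℚ) / a i⌉ = α / a i * c * (j * b i + (-(j * b i)) % a i) :=
    fun i => by
    rw [← mul_ceil_intCast_div (ha i), Int.cast_mul]
    nth_rw 1 [← Int.ediv_mul_cancel (hdvd i)]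
    ring
  have hn : α * c * ⌈(j * bn : ℚ) / c⌉ = α * (j * bn + (-(j * bn)) % c) := by
    rw [← mul_ceil_intCast_div hc, Int.cast_mul]; ring
  have hsum : α * c * ∑ i, ⌈(j * b i : ℚ) / a i⌉ =
      j * ∑ i, b i * (α / a i * c) + residueSum a b α j * c := by
    rw [mul_sum, residueSum, mul_sum, sum_mul, ← sum_add_distrib]
    exact sum_congr rfl fun i _ => by rw [hi]; ring
  rw [hΔ, abs_of_neg he0]
  linear_combination (-j) * heq - hsum - hn + c * Int.mul_ediv_add_emod (residueSum a b α j) α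

lemma tau_eq_stair_sub (ha : ∀ i, 0 < a i) (hdvd : ∀ i, a i ∣ α) (hα : 0 < α) (hc : 0 < c)
    (hb : ∀ i, 0 ≤ b i) (hbn : 0 ≤ bn)
    (heq : e0 * (α * c) + ∑ i, b i * (α / a i * c) + bn * α = -1) {Δ τ : ℤ → ℤ}
    (hΔ : ∀ x : ℤ, Δ x = 1 + |e0| * x -
      ((∑ i, ⌈(x * b i : ℚ) / (a i : ℚ)⌉) + ⌈(x * bn : ℚ) / (c : ℚ)⌉))
    (hτ : ∀ x : ℤ, τ x = ∑ i ∈ Ico 0 x, Δ i) (x R : ℤ) (hx : 0 ≤ x) (hxR : x < R) :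
    τ x = stair α c R x - ∑ i ∈ Ico 0 x, residueSum a b α i / α := by
  have hcop : IsCoprime α c := (isCoprime_of_dvd_mul_add_one (x := c)
    (by rw [mul_comm]; exact dvd_sum_mul_add_one_of_seifert_eq heq)).symm
  rw [hτ]
  exact sum_Ico_eq_stair_sub hα hc hcop
    (fun j => ⟨Int.emod_nonneg _ hα.ne', Int.emod_lt_of_pos _ hα⟩)
    (fun j => ⟨Int.emod_nonneg _ hc.ne', Int.emod_lt_of_pos _ hc⟩)
    (mul_Δ_eq ha hdvd hc (neg_of_seifert_eq ha hα hc hb hbn heq) heq hΔ) hx hxR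

lemma exists_forall_tau_le (ha : ∀ i, 0 < a i) (hdvd : ∀ i, a i ∣ α) (hα : 0 < α) (hc : 0 < c)
    (hb : ∀ i, 0 ≤ b i) (hbn : 0 ≤ bn)
    (heq : e0 * (α * c) + ∑ i, b i * (α / a i * c) + bn * α = -1) {Δ τ : ℤ → ℤ}
    (hΔ : ∀ x : ℤ, Δ x = 1 + |e0| * x -
      ((∑ i, ⌈(x * b i : ℚ) / (a i : ℚ)⌉) + ⌈(x * bn : ℚ) / (c : ℚ)⌉))
    (hτ : ∀ x : ℤ, τ x = ∑ i ∈ Ico 0 x, Δ i) {B : ℤ} (hB : 0 ≤ B)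
    (hE : ∀ j, residueSum a b α j / α ≤ B) : ∃ x₀, 0 ≤ x₀ ∧ ∀ x, 0 ≤ x → τ x₀ ≤ τ x := by
  simp only [hτ]
  exact exists_forall_sum_Ico_le (by positivity) fun j hj =>
    nonneg_of_mul_eq hα hc (Int.emod_lt_of_pos _ hα) (Int.emod_lt_of_pos _ hc)
      (mul_Δ_eq ha hdvd hc (neg_of_seifert_eq ha hα hc hb hbn heq) heq hΔ j) (hE j) hj

end Seifert

end TauSequence

open TauSequence

theorem stmt_18_general (n : ℕ) (hn : 3 ≤ n) (a : Fin (n - 1) → ℤ) (an : ℤ)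
    (ha : ∀ i, 2 ≤ a i) (han : 2 ≤ an)
    (α P : ℤ) (hα : α = ∏ i, a i) (hP : P = α * an)
    (e0 : ℤ) (b : Fin (n - 1) → ℤ) (bn : ℤ)
    (hb : ∀ i, 1 ≤ b i ∧ b i < a i) (hbn : 1 ≤ bn ∧ bn < an)
    (heq : e0 * P + (∑ i, b i * (P / a i)) + bn * α = -1)
    (Δ : ℤ → ℤ)
    (hΔ : ∀ x : ℤ, Δ x = 1 + |e0| * x -
      ((∑ i, ⌈(x * b i : ℚ) / (a i : ℚ)⌉) + ⌈(x * bn : ℚ) / (an : ℚ)⌉))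
    -- the modified Seifert data with last fiber an' = an + α
    (an' P' : ℤ) (han' : an' = an + α) (hP' : P' = α * an')
    (e0' : ℤ) (b' : Fin (n - 1) → ℤ) (bn' : ℤ)
    (hb' : ∀ i, 1 ≤ b' i ∧ b' i < a i) (hbn' : 1 ≤ bn' ∧ bn' < an')
    (heq' : e0' * P' + (∑ i, b' i * (P' / a i)) + bn' * α = -1)
    (Δ' : ℤ → ℤ)
    (hΔ' : ∀ x : ℤ, Δ' x = 1 + |e0'| * x -
      ((∑ i, ⌈(x * b' i : ℚ) / (a i : ℚ)⌉) + ⌈(x * bn' : ℚ) / (an' : ℚ)⌉))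
    (t : ℤ) (ht : 2 * t = ((n : ℤ) - 2) * α - (∑ i, α / a i) + 1)
    (τ τ' : ℤ → ℤ)
    (hτ : ∀ x : ℤ, τ x = ∑ i ∈ Finset.Ico (0 : ℤ) x, Δ i)
    (hτ' : ∀ x : ℤ, τ' x = ∑ i ∈ Finset.Ico (0 : ℤ) x, Δ' i) :
    ∃ m m2 : ℤ, 0 ≤ m ∧ 0 ≤ m2 ∧
      (∀ x : ℤ, 0 ≤ x → τ m ≤ τ x) ∧ (∀ x : ℤ, 0 ≤ x → τ' m2 ≤ τ' x) ∧
      τ' m2 - τ m = -(t * (t - 1) / 2) ∧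
      8 * (τ' m2 - τ m) = -((((n : ℤ) - 2) * α - ∑ i, α / a i) ^ 2 - 1) := by
  have ha₀ : ∀ i, 0 < a i := fun i => by linarith [ha i]
  have hα₀ : 0 < α := hα ▸ prod_pos fun i _ => ha₀ i
  have hdvd : ∀ i, a i ∣ α := fun i => hα ▸ dvd_prod_of_mem a (mem_univ i)
  have hb₀ : ∀ i, 0 ≤ b i ∧ b i < a i := fun i => ⟨by linarith [hb i], (hb i).2⟩
  subst hP hP' han'
  simp only [fun c i => Int.mul_ediv_assoc' c (hdvd i)] at heq heq'
  obtain rfl : b = b' := eq_of_seifert_eq_of_dvd_sub (fun i => (ha₀ i).ne') hα hb₀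
    (fun i => ⟨by linarith [hb' i], (hb' i).2⟩) heq heq' (by simp)
  have hEsum : ∑ ρ ∈ Ico 0 α, residueSum a b α ρ / α = t := by
    refine sum_residueSum_div ha₀ hdvd hα₀ (fun i => isCoprime_of_dvd_mul_add_one
      (dvd_mul_add_one_of_seifert_eq (fun i => (ha₀ i).ne') hα heq i))
      (isCoprime_of_dvd_mul_add_one (dvd_sum_mul_add_one_of_seifert_eq heq)) ?_
    rw [ht]; push_cast [Nat.cast_sub (by omega : 1 ≤ n)]; ring
  have hE₀ : ∀ j, 0 ≤ residueSum a b α j / α := fun j =>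
    Int.ediv_nonneg (residueSum_nonneg ha₀ hα₀.le j) hα₀.le
  have hEper := (residueSum_periodic (b := b) hdvd).comp (· / α)
  have hEle : ∀ j, residueSum a b α j / α ≤ t := fun j => hEsum ▸ hEper.le_sum_Ico_zero hα₀ hE₀ j
  have ht₀ : 0 ≤ t := hEsum ▸ sum_nonneg fun j _ => hE₀ j
  obtain ⟨m, hm, hmin⟩ := exists_forall_tau_le ha₀ hdvd hα₀ (by omega) (fun i => (hb₀ i).1)
    (by omega) heq hΔ hτ ht₀ hEle
  obtain ⟨m', hm', hmin'⟩ := exists_forall_tau_le ha₀ hdvd hα₀ (by omega) (fun i => (hb₀ i).1)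
    (by omega) heq' hΔ' hτ' ht₀ hEle
  have key := two_mul_sub_eq_of_isMin hα₀ (by omega) hE₀ hEper hEsum
    (tau_eq_stair_sub ha₀ hdvd hα₀ (by omega) (fun i => (hb₀ i).1) (by omega) heq hΔ hτ)
    (tau_eq_stair_sub ha₀ hdvd hα₀ (by omega) (fun i => (hb₀ i).1) (by omega) heq' hΔ' hτ')
    hm hm' hmin hmin'
  refine ⟨m, m', hm, hm', hmin, hmin', ?_, ?_⟩
  · rw [show t * (t - 1) = 2 * -(τ' m' - τ m) by linarith, Int.mul_ediv_cancel_left _ two_ne_zero]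
    ring
  · linear_combination 4 * key - (((n : ℤ) - 2) * α - ∑ i, α / a i + 2 * t - 1) * ht

/-- The minima over the nonnegative integers of the two τ-sequences exist and min τ′ − min τ = −t(t−1)/2 = −(1/8)·(((n−2)·α − Σ α/a_i)² − 1). -/
theorem stmt_18 (n : ℕ) (hn : 3 ≤ n) (a : Fin (n - 1) → ℤ) (an : ℤ)
    (ha : ∀ i, 2 ≤ a i) (han : 2 ≤ an)
    (hcop : ∀ i j, i ≠ j → IsCoprime (a i) (a j))
    (hcopn : ∀ i, IsCoprime (a i) an)
    (α P : ℤ) (hα : α = ∏ i, a i) (hP : P = α * an)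
    (e0 : ℤ) (b : Fin (n - 1) → ℤ) (bn : ℤ)
    (hb : ∀ i, 1 ≤ b i ∧ b i < a i) (hbn : 1 ≤ bn ∧ bn < an)
    (heq : e0 * P + (∑ i, b i * (P / a i)) + bn * α = -1)
    (Δ : ℤ → ℤ)
    (hΔ : ∀ x : ℤ, Δ x = 1 + |e0| * x -
      ((∑ i, ⌈(x * b i : ℚ) / (a i : ℚ)⌉) + ⌈(x * bn : ℚ) / (an : ℚ)⌉))
    -- the modified Seifert data with last fiber an' = an + α
    (an' P' : ℤ) (han' : an' = an + α) (hP' : P' = α * an')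
    (e0' : ℤ) (b' : Fin (n - 1) → ℤ) (bn' : ℤ)
    (hb' : ∀ i, 1 ≤ b' i ∧ b' i < a i) (hbn' : 1 ≤ bn' ∧ bn' < an')
    (heq' : e0' * P' + (∑ i, b' i * (P' / a i)) + bn' * α = -1)
    (Δ' : ℤ → ℤ)
    (hΔ' : ∀ x : ℤ, Δ' x = 1 + |e0'| * x -
      ((∑ i, ⌈(x * b' i : ℚ) / (a i : ℚ)⌉) + ⌈(x * bn' : ℚ) / (an' : ℚ)⌉))
    (t : ℤ) (ht : 2 * t = ((n : ℤ) - 2) * α - (∑ i, α / a i) + 1)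
    (τ τ' : ℤ → ℤ)
    (hτ : ∀ x : ℤ, τ x = ∑ i ∈ Finset.Ico (0 : ℤ) x, Δ i)
    (hτ' : ∀ x : ℤ, τ' x = ∑ i ∈ Finset.Ico (0 : ℤ) x, Δ' i) :
    ∃ m m2 : ℤ, 0 ≤ m ∧ 0 ≤ m2 ∧
      (∀ x : ℤ, 0 ≤ x → τ m ≤ τ x) ∧ (∀ x : ℤ, 0 ≤ x → τ' m2 ≤ τ' x) ∧
      τ' m2 - τ m = -(t * (t - 1) / 2) ∧
      8 * (τ' m2 - τ m) = -((((n : ℤ) - 2) * α - ∑ i, α / a i) ^ 2 - 1) :=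
  stmt_18_general n hn a an ha han α P hα hP e0 b bn hb hbn heq Δ hΔ an' P' han' hP' e0' b' bn' hb'
    hbn' heq' Δ' hΔ' t ht τ τ' hτ hτ'
end

section
/- The Δ-functions of Y = Σ(a_1,…,a_n) and Y'' = Σ(a_1,…,a_{n−1},a_n+2α) agree on the central symmetric windows determining their maximal monotone subroots: for every integer i with 0 < i < a_n + α, one has Δ((t−1)·a_n − α + i) = Δ''((t−1)·(a_n+2α) + i). -/
/-!
Write `S = ∑_{j<n} b_j α / a_j`, so that the Seifert equation reads `e₀ α a_n + S a_n + b_n α = -1`.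
Reducing it mod `a_j` shows that `b_j` is the inverse of `-(P / a_j)` mod `a_j`; as `a_n'' ≡ a_n`
mod `α`, the first `n - 1` coefficients of `Y''` are those of `Y`. The two evaluation points differ by
`(2t - 1) α`, a multiple of every `a_j`, so the first `n - 1` ceilings only shift by `(2t - 1) S`.
Eliminating `e₀` and `e₀''` with the two Seifert equations, `a_n a_n''` times the difference of the
`Δ`-values becomes `2i - a_n'' - r a_n'' + r'' a_n`, where `r` and `r''` are the remainders left by the
two last ceilings; for `0 < i < a_n + α` this lies strictly between `∓ a_n a_n''`.
-/

open Finset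

lemma ceil_intCast_div_mul_bounds {m d : ℤ} (hd : 0 < d) :
    m ≤ ⌈(m : ℚ) / d⌉ * d ∧ ⌈(m : ℚ) / d⌉ * d < m + d := by
  have hd' : (0 : ℚ) < d := by exact_mod_cast hd
  have hle := Int.le_ceil ((m : ℚ) / d)
  have hlt := Int.ceil_lt_add_one ((m : ℚ) / d)
  rw [div_le_iff₀ hd'] at hle
  rw [← sub_lt_iff_lt_add, lt_div_iff₀ hd'] at hlt
  constructor
  · exact_mod_cast hle
  · have : (⌈(m : ℚ) / d⌉ - 1) * d < m := by exact_mod_cast hlt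
    linarith

lemma ceil_add_mul_mul_div {d : ℤ} (hd : d ≠ 0) (x k y : ℤ) :
    ⌈((x + d * k : ℤ) * y : ℚ) / d⌉ = ⌈(x * y : ℚ) / d⌉ + k * y := by
  have hd' : (d : ℚ) ≠ 0 := by exact_mod_cast hd
  have : ((x + d * k : ℤ) * y : ℚ) / d = (x * y : ℚ) / d + ((k * y : ℤ) : ℚ) := by
    push_cast
    field_simp
  rw [this, Int.ceil_add_intCast]

section SeifertEquation

variable {ι : Type*} [Fintype ι] {a b : ι → ℤ} {α : ℤ}

lemma dvd_prod_ediv_of_ne [DecidableEq ι] {j k : ι} (hk : a k ≠ 0) (hjk : j ≠ k) :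
    a j ∣ (∏ i, a i) / a k := by
  rw [← mul_prod_erase univ a (mem_univ k), Int.mul_ediv_cancel_left _ hk]
  exact dvd_prod_of_mem a (mem_erase.mpr ⟨hjk, mem_univ j⟩)

lemma sum_mul_mul_ediv (hdvd : ∀ i, a i ∣ α) (m : ℤ) :
    ∑ i, b i * (α * m / a i) = (∑ i, b i * (α / a i)) * m := by
  rw [sum_mul]
  refine sum_congr rfl fun i _ => ?_
  rw [Int.mul_ediv_assoc' m (hdvd i), mul_assoc]

lemma dvd_mul_ediv_mul_add_one (hα : α = ∏ i, a i) (ha : ∀ i, a i ≠ 0) {e m bn : ℤ}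
    (heq : e * (α * m) + (∑ i, b i * (α / a i)) * m + bn * α = -1) (j : ι) :
    a j ∣ b j * (α / a j) * m + 1 := by
  classical
  have hdvd : a j ∣ α := hα ▸ dvd_prod_of_mem a (mem_univ j)
  have hrest : a j ∣ ∑ i ∈ univ.erase j, b i * (α / a i) := by
    refine dvd_sum fun i hi => Dvd.dvd.mul_left ?_ _
    exact hα ▸ dvd_prod_ediv_of_ne (ha i) (ne_of_mem_erase hi).symm
  rw [← add_sum_erase univ _ (mem_univ j)] at heq
  have hsplit : b j * (α / a j) * m + 1
      = -(e * m * α + (∑ i ∈ univ.erase j, b i * (α / a i)) * m + bn * α) := by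
    linear_combination heq
  rw [hsplit, dvd_neg]
  exact dvd_add (dvd_add (hdvd.mul_left _) (hrest.mul_right _)) (hdvd.mul_left _)

lemma seifert_coeff_eq_of_dvd_sub (hα : α = ∏ i, a i) {b' : ι → ℤ} {e e' m m' bn bn' : ℤ}
    (hb : ∀ i, 1 ≤ b i ∧ b i < a i) (hb' : ∀ i, 1 ≤ b' i ∧ b' i < a i) (hm : α ∣ m' - m)
    (heq : e * (α * m) + (∑ i, b i * (α / a i)) * m + bn * α = -1)
    (heq' : e' * (α * m') + (∑ i, b' i * (α / a i)) * m' + bn' * α = -1) :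
    b' = b := by
  have ha : ∀ i, a i ≠ 0 := fun i => by linarith [hb i]
  funext j
  set c := α / a j
  have h := dvd_mul_ediv_mul_add_one hα ha heq j
  have h' := dvd_mul_ediv_mul_add_one hα ha heq' j
  have hm' : a j ∣ m' - m := (hα ▸ dvd_prod_of_mem a (mem_univ j)).trans hm
  have h'' : a j ∣ b' j * c * m + 1 := by
    have := dvd_sub h' (hm'.mul_left (b' j * c))
    rwa [show b' j * c * m' + 1 - b' j * c * (m' - m) = b' j * c * m + 1 by ring] at this
  have hdiff : a j ∣ b' j - b j := by
    have := dvd_sub (h.mul_left (b' j)) (h''.mul_left (b j))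
    rwa [show b' j * (b j * c * m + 1) - b j * (b' j * c * m + 1) = b' j - b j by ring] at this
  have habs : |b' j - b j| < a j := abs_sub_lt_iff.mpr ⟨by linarith [hb j, hb' j],
    by linarith [hb j, hb' j]⟩
  exact sub_eq_zero.mp (Int.eq_zero_of_abs_lt_dvd hdiff habs)

lemma sum_ceil_mul_div_of_eq_add (hdvd : ∀ i, a i ∣ α) (ha : ∀ i, a i ≠ 0) {x x' k : ℤ}
    (hx : x' = x + k * α) :
    ∑ i, ⌈(x' * b i : ℚ) / a i⌉ = ∑ i, ⌈(x * b i : ℚ) / a i⌉ + k * ∑ i, b i * (α / a i) := by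
  rw [mul_sum, ← sum_add_distrib]
  refine sum_congr rfl fun i _ => ?_
  have : x' = x + a i * (k * (α / a i)) := by
    rw [hx, mul_left_comm, Int.mul_ediv_cancel' (hdvd i)]
  rw [this, ceil_add_mul_mul_div (ha i)]
  ring

end SeifertEquation

lemma seifert_e_neg {e α m S bn : ℤ} (hα : 0 < α) (hm : 0 < m) (hS : 0 ≤ S) (hbn : 0 < bn)
    (heq : e * (α * m) + S * m + bn * α = -1) : e < 0 := by
  by_contra! he
  nlinarith [mul_nonneg he (mul_pos hα hm).le, mul_nonneg hS hm.le, mul_pos hbn hα]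

/-- The terms of `Δ` and `Δ''` that are not ceilings over the first `n - 1` fibers. -/
lemma last_fiber_terms_eq {α an e e' S bn bn' s i : ℤ} (hα : 0 < α) (han : 0 < an)
    (heq : e * (α * an) + S * an + bn * α = -1)
    (heq' : e' * (α * (an + 2 * α)) + S * (an + 2 * α) + bn' * α = -1)
    (hi : 0 < i) (hi' : i < an + α) :
    -e * (s * an - α + i) - ⌈((s * an - α + i : ℤ) * bn : ℚ) / an⌉
      = -e' * (s * (an + 2 * α) + i) - (2 * s + 1) * S
        - ⌈((s * (an + 2 * α) + i : ℤ) * bn' : ℚ) / (an + 2 * α : ℤ)⌉ := by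
  have han' : 0 < an + 2 * α := by linarith
  set an' := an + 2 * α
  set X := s * an - α + i
  set X' := s * an' + i
  set q := ⌈(X * bn : ℚ) / an⌉
  set q' := ⌈(X' * bn' : ℚ) / an'⌉
  obtain ⟨hq₁, hq₂⟩ := ceil_intCast_div_mul_bounds (m := X * bn) han
  obtain ⟨hq₁', hq₂'⟩ := ceil_intCast_div_mul_bounds (m := X' * bn') han'
  push_cast at hq₁ hq₂ hq₁' hq₂'
  set D := -e * X - q - (-e' * X' - (2 * s + 1) * S - q')
  have hD : an * an' * D = 2 * i - an' - (q * an - X * bn) * an' + (q' * an' - X' * bn') * an := by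
    refine mul_left_cancel₀ hα.ne' ?_
    linear_combination (-X * an') * heq + (X' * an) * heq'
  have hlt : |an * an' * D| < an * an' := by
    rw [hD, abs_lt]
    constructor <;> nlinarith
  have hD0 : D = 0 := (mul_eq_zero.mp (Int.eq_zero_of_abs_lt_dvd (dvd_mul_right _ D) hlt)).resolve_left
    (mul_pos han han').ne'
  linear_combination hD0

theorem stmt_19_general (n : ℕ) (a : Fin (n - 1) → ℤ) (an : ℤ)
    (α P : ℤ) (hα : α = ∏ i, a i) (hP : P = α * an)
    (e0 : ℤ) (b : Fin (n - 1) → ℤ) (bn : ℤ)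
    (hb : ∀ i, 1 ≤ b i ∧ b i < a i) (hbn : 1 ≤ bn ∧ bn < an)
    (heq : e0 * P + (∑ i, b i * (P / a i)) + bn * α = -1)
    (Δ : ℤ → ℤ)
    (hΔ : ∀ x : ℤ, Δ x = 1 + |e0| * x -
      ((∑ i, ⌈(x * b i : ℚ) / (a i : ℚ)⌉) + ⌈(x * bn : ℚ) / (an : ℚ)⌉))
    -- the modified Seifert data with last fiber an' = an + 2 * α
    (an' P' : ℤ) (han' : an' = an + 2 * α) (hP' : P' = α * an')
    (e0' : ℤ) (b' : Fin (n - 1) → ℤ) (bn' : ℤ)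
    (hb' : ∀ i, 1 ≤ b' i ∧ b' i < a i) (hbn' : 1 ≤ bn' ∧ bn' < an')
    (heq' : e0' * P' + (∑ i, b' i * (P' / a i)) + bn' * α = -1)
    (Δ' : ℤ → ℤ)
    (hΔ' : ∀ x : ℤ, Δ' x = 1 + |e0'| * x -
      ((∑ i, ⌈(x * b' i : ℚ) / (a i : ℚ)⌉) + ⌈(x * bn' : ℚ) / (an' : ℚ)⌉))
    (t : ℤ) :
    ∀ i : ℤ, 0 < i → i < an + α →
      Δ ((t - 1) * an - α + i) = Δ' ((t - 1) * (an + 2 * α) + i) := by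
  intro i hi hi'
  subst hP hP' han'
  have ha : ∀ j, 0 < a j := fun j => by linarith [hb j]
  have hdvd : ∀ j, a j ∣ α := fun j => hα ▸ dvd_prod_of_mem a (mem_univ j)
  have hαpos : 0 < α := hα ▸ prod_pos fun j _ => ha j
  rw [sum_mul_mul_ediv hdvd] at heq heq'
  have hb'b : b' = b := seifert_coeff_eq_of_dvd_sub hα hb hb' ⟨2, by ring⟩ heq heq'
  subst b'
  have hS : 0 ≤ ∑ j, b j * (α / a j) :=
    sum_nonneg fun j _ => mul_nonneg (by linarith [hb j]) (Int.ediv_nonneg hαpos.le (ha j).le)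
  have he0 := seifert_e_neg hαpos (by linarith) hS (by linarith) heq
  have he0' := seifert_e_neg hαpos (by linarith) hS (by linarith) heq'
  rw [hΔ, hΔ', abs_of_neg he0, abs_of_neg he0',
    sum_ceil_mul_div_of_eq_add hdvd (fun j => (ha j).ne')
      (x' := (t - 1) * (an + 2 * α) + i) (x := (t - 1) * an - α + i) (k := 2 * t - 1) (by ring)]
  linear_combination last_fiber_terms_eq (s := t - 1) hαpos (by linarith) heq heq' hi hi'

/-- The Δ-functions of Σ(a_1,…,a_n) and Σ(a_1,…,a_{n−1},a_n+2α) agree on the central symmetric windows: for 0 < i < a_n + α, Δ((t−1)·a_n − α + i) = Δ″((t−1)·(a_n+2α) + i). (Here Δ′ plays the role of Δ″.) -/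
theorem stmt_19 (n : ℕ) (hn : 3 ≤ n) (a : Fin (n - 1) → ℤ) (an : ℤ)
    (ha : ∀ i, 2 ≤ a i) (han : 2 ≤ an)
    (hcop : ∀ i j, i ≠ j → IsCoprime (a i) (a j))
    (hcopn : ∀ i, IsCoprime (a i) an)
    (α P : ℤ) (hα : α = ∏ i, a i) (hP : P = α * an)
    (e0 : ℤ) (b : Fin (n - 1) → ℤ) (bn : ℤ)
    (hb : ∀ i, 1 ≤ b i ∧ b i < a i) (hbn : 1 ≤ bn ∧ bn < an)
    (heq : e0 * P + (∑ i, b i * (P / a i)) + bn * α = -1)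
    (Δ : ℤ → ℤ)
    (hΔ : ∀ x : ℤ, Δ x = 1 + |e0| * x -
      ((∑ i, ⌈(x * b i : ℚ) / (a i : ℚ)⌉) + ⌈(x * bn : ℚ) / (an : ℚ)⌉))
    -- the modified Seifert data with last fiber an' = an + 2 * α
    (an' P' : ℤ) (han' : an' = an + 2 * α) (hP' : P' = α * an')
    (e0' : ℤ) (b' : Fin (n - 1) → ℤ) (bn' : ℤ)
    (hb' : ∀ i, 1 ≤ b' i ∧ b' i < a i) (hbn' : 1 ≤ bn' ∧ bn' < an')
    (heq' : e0' * P' + (∑ i, b' i * (P' / a i)) + bn' * α = -1)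
    (Δ' : ℤ → ℤ)
    (hΔ' : ∀ x : ℤ, Δ' x = 1 + |e0'| * x -
      ((∑ i, ⌈(x * b' i : ℚ) / (a i : ℚ)⌉) + ⌈(x * bn' : ℚ) / (an' : ℚ)⌉))
    (t : ℤ) (ht : 2 * t = ((n : ℤ) - 2) * α - (∑ i, α / a i) + 1) :
    ∀ i : ℤ, 0 < i → i < an + α →
      Δ ((t - 1) * an - α + i) = Δ' ((t - 1) * (an + 2 * α) + i) :=
  stmt_19_general n a an α P hα hP e0 b bn hb hbn heq Δ hΔ an' P' han' hP' e0' b' bn' hb' hbn' heq'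
    Δ' hΔ' t
end
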